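/- arXiv:1604.05510 — 2 statements merged into one kernel-verified Lean document; each statement's English description precedes it below -/
import Mathlib

section
/- Let T be a rooted directed tree whose root r has exactly one in-neighbor (i.e., r is a leaf of the underlying undirected tree), and let T' be the subtree of T rooted at the unique child-in-neighbor of r. Then for every positive integer k, rev(T) ≤ k if and only if vrev(T') ≤ k − 1. -/
/-- A system for pebbling: a finite directed tree given by a root and a parent
function (edges are directed from each non-root vertex to its parent, i.e.
toward the root). -/
structure PebSys (V : Type) where
  root : V
  parent : V → V

/-- `T` is a genuine rooted directed tree: the root is a fixed point of the
parent map and every vertex reaches the root by iterating the parent map. -/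
def IsRDTree {V : Type} [Fintype V] (T : PebSys V) : Prop :=
  T.parent T.root = T.root ∧ ∀ v : V, ∃ k : ℕ, T.parent^[k] v = T.root

/-- One legal move of the reversible pebble game, from configuration `P` to
configuration `Q`: exactly one vertex `v` is pebbled or unpebbled, and all
in-neighbours of `v` (vertices `u ≠ v` with `parent u = v`) carry pebbles
in `P`. -/
def PebStep {V : Type} [DecidableEq V] (T : PebSys V) (P Q : Finset V) : Prop :=
  ∃ v : V, ((v ∉ P ∧ Q = insert v P) ∨ (v ∉ Q ∧ P = insert v Q)) ∧
    ∀ u : V, u ≠ v → T.parent u = v → u ∈ P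

/-- A persistent reversible pebbling: starts with no pebbles, ends with a
pebble exactly on the root, consecutive configurations are legal moves. -/
def IsPebbling {V : Type} [DecidableEq V] (T : PebSys V) (L : List (Finset V)) : Prop :=
  L.head? = some ∅ ∧ L.getLast? = some {T.root} ∧ L.Chain' (PebStep T)

/-- A visiting reversible pebbling: starts and ends with no pebbles, and the
root carries a pebble at some point. -/
def IsVisPebbling {V : Type} [DecidableEq V] (T : PebSys V) (L : List (Finset V)) : Prop :=
  L.head? = some ∅ ∧ L.getLast? = some ∅ ∧ (∃ P ∈ L, T.root ∈ P) ∧ L.Chain' (PebStep T)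

/-- The space of a pebbling: the maximum number of pebbles in any configuration. -/
def pebSpace {V : Type} (L : List (Finset V)) : ℕ := (L.map Finset.card).foldr max 0

/-- The persistent reversible pebbling number `rev`. -/
noncomputable def revNum {V : Type} [DecidableEq V] (T : PebSys V) : ℕ :=
  sInf {k | ∃ L : List (Finset V), IsPebbling T L ∧ pebSpace L ≤ k}

/-- The visiting reversible pebbling number `vrev`. -/
noncomputable def vrevNum {V : Type} [DecidableEq V] (T : PebSys V) : ℕ :=
  sInf {k | ∃ L : List (Finset V), IsVisPebbling T L ∧ pebSpace L ≤ k}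

/-!
A pebbling in space `k` is a walk from `∅` to `{r}` along legal moves between configurations of
size at most `k`, and such walks can be reversed. Look at the last move pebbling the root `r`:
its only in-neighbour `c` is pebbled there and `r` stays pebbled afterwards, so deleting `r` gives
a walk of `T'` in space `k - 1` from a configuration containing `c` down to `∅`; preceded by its
reverse it is a visiting pebbling of `T'`. Conversely, run a visiting pebbling of `T'` up to a
configuration containing `c`, pebble `r`, and undo the first part keeping `r`: this pebbles `T` in
space one more. So `rev T = vrev T' + 1` when either is attained, and otherwise both `sInf`s are
those of the empty set, namely `0`.
-/

open Relation

lemma pebSpace_le_iff {V : Type} {L : List (Finset V)} {k : ℕ} :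
    pebSpace L ≤ k ↔ ∀ P ∈ L, P.card ≤ k := by
  induction L with
  | nil => simp [pebSpace]
  | cons a l ih => simp_all [pebSpace]

section PebMove

variable {V : Type} [DecidableEq V] (T : PebSys V)

lemma PebStep.symm {P Q : Finset V} (h : PebStep T P Q) : PebStep T Q P := by
  obtain ⟨v, hv, hin⟩ := h
  refine ⟨v, hv.symm, fun u hu hp => ?_⟩
  rcases hv with ⟨-, rfl⟩ | ⟨-, rfl⟩
  · exact Finset.mem_insert_of_mem (hin u hu hp)
  · exact (Finset.mem_insert.mp (hin u hu hp)).resolve_left hu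

lemma PebStep.insert {P Q : Finset V} {r : V} (hP : r ∉ P) (hQ : r ∉ Q)
    (h : PebStep T P Q) : PebStep T (insert r P) (insert r Q) := by
  obtain ⟨v, hv, hin⟩ := h
  refine ⟨v, ?_, fun u hu hp => Finset.mem_insert_of_mem (hin u hu hp)⟩
  rcases hv with ⟨hvP, rfl⟩ | ⟨hvQ, rfl⟩
  · have hvr : v ≠ r := by rintro rfl; simp at hQ
    exact Or.inl ⟨by simp [hvr, hvP], Finset.insert_comm r v P⟩
  · have hvr : v ≠ r := by rintro rfl; simp at hP
    exact Or.inr ⟨by simp [hvr, hvQ], Finset.insert_comm r v Q⟩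

lemma PebStep.mem_of_parent_eq {P Q : Finset V} {r u : V} (h : PebStep T P Q)
    (hP : r ∉ P) (hQ : r ∈ Q) (hu : u ≠ r) (hur : T.parent u = r) : u ∈ P := by
  obtain ⟨v, hv, hin⟩ := h
  rcases hv with ⟨-, rfl⟩ | ⟨-, rfl⟩
  · obtain rfl : r = v := (Finset.mem_insert.mp hQ).resolve_right hP
    exact hin u hu hur
  · exact absurd (Finset.mem_insert_of_mem hQ) hP

def PebMove (k : ℕ) (P Q : Finset V) : Prop :=
  PebStep T P Q ∧ P.card ≤ k ∧ Q.card ≤ k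

instance (k : ℕ) : Std.Symm (PebMove T k) where
  symm _ _ h := ⟨h.1.symm, h.2.2, h.2.1⟩

variable {T} {k : ℕ}

lemma card_le_of_reflTransGen_pebMove {A B : Finset V} (h : ReflTransGen (PebMove T k) A B)
    (hA : A.card ≤ k) : B.card ≤ k := by
  induction h with
  | refl => exact hA
  | tail _ hmove _ => exact hmove.2.2

lemma reflTransGen_pebMove_of_isChain {L : List (Finset V)} (hL : L.IsChain (PebStep T))
    (hk : ∀ P ∈ L, P.card ≤ k) {B : Finset V} (hB : L.getLast? = some B) {P : Finset V}
    (hP : P ∈ L) : ReflTransGen (PebMove T k) P B := by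
  induction L generalizing P with
  | nil => simp at hP
  | cons a l ih =>
    cases l with
    | nil =>
      obtain rfl : P = a := List.mem_singleton.mp hP
      obtain rfl : P = B := by simpa using hB
      rfl
    | cons b l =>
      rw [List.isChain_cons_cons] at hL
      have ih' : ∀ {P}, P ∈ b :: l → ReflTransGen (PebMove T k) P B :=
        ih hL.2 (fun Q hQ => hk Q (List.mem_cons_of_mem a hQ))
          (by simpa [List.getLast?_cons_cons] using hB)
      rcases List.mem_cons.mp hP with rfl | hP
      · exact .head ⟨hL.1, hk _ List.mem_cons_self, hk b (by simp)⟩ (ih' List.mem_cons_self)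
      · exact ih' hP

lemma exists_isChain_of_reflTransGen_pebMove {A B : Finset V}
    (h : ReflTransGen (PebMove T k) A B) {L : List (Finset V)} (hL : L.IsChain (PebStep T))
    (hk : ∀ P ∈ L, P.card ≤ k) (hB : L.head? = some B) :
    ∃ L' : List (Finset V), L'.head? = some A ∧ L'.getLast? = L.getLast? ∧ L ⊆ L' ∧
      L'.IsChain (PebStep T) ∧ ∀ P ∈ L', P.card ≤ k := by
  induction h using Relation.ReflTransGen.head_induction_on with
  | refl => exact ⟨L, hB, rfl, fun _ h => h, hL, hk⟩
  | @head A C hmove _ ih =>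
    obtain ⟨L', hhead, hlast, hsub, hchain, hk'⟩ := ih
    obtain ⟨t, rfl⟩ : ∃ t, L' = C :: t := List.head?_eq_some_iff.mp hhead
    refine ⟨A :: C :: t, rfl, by rwa [List.getLast?_cons_cons],
      fun _ hP => by simp [hsub hP], ?_, ?_⟩
    · exact List.isChain_cons_cons.mpr ⟨hmove.1, hchain⟩
    · simpa [hmove.2.1] using hk'

lemma exists_isPebbling_iff :
    (∃ L, IsPebbling T L ∧ pebSpace L ≤ k) ↔ ReflTransGen (PebMove T k) ∅ {T.root} := by
  constructor
  · rintro ⟨L, ⟨hhead, hlast, hchain⟩, hk⟩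
    exact reflTransGen_pebMove_of_isChain hchain (pebSpace_le_iff.mp hk) hlast
      (List.mem_of_mem_head? hhead)
  · intro h
    have hroot := card_le_of_reflTransGen_pebMove h (by simp)
    obtain ⟨L, hhead, hlast, -, hchain, hk⟩ :=
      exists_isChain_of_reflTransGen_pebMove h (List.isChain_singleton _) (by simpa) rfl
    exact ⟨L, ⟨hhead, hlast, hchain⟩, pebSpace_le_iff.mpr hk⟩

lemma exists_isVisPebbling_iff : (∃ L, IsVisPebbling T L ∧ pebSpace L ≤ k) ↔
    ∃ P, T.root ∈ P ∧ ReflTransGen (PebMove T k) ∅ P := by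
  constructor
  · rintro ⟨L, ⟨-, hlast, ⟨P, hP, hroot⟩, hchain⟩, hk⟩
    exact ⟨P, hroot, Std.Symm.symm _ _
      (reflTransGen_pebMove_of_isChain hchain (pebSpace_le_iff.mp hk) hlast hP)⟩
  · rintro ⟨P, hroot, h⟩
    obtain ⟨L₀, hhead₀, hlast₀, -, hchain₀, hk₀⟩ :=
      exists_isChain_of_reflTransGen_pebMove (Std.Symm.symm _ _ h) (List.isChain_singleton _)
        (by simp) rfl
    obtain ⟨L, hhead, hlast, hsub, hchain, hk⟩ :=
      exists_isChain_of_reflTransGen_pebMove h hchain₀ hk₀ hhead₀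
    refine ⟨L, ⟨hhead, hlast.trans hlast₀, ?_, hchain⟩, pebSpace_le_iff.mpr hk⟩
    exact ⟨P, hsub (List.mem_of_mem_head? hhead₀), hroot⟩

end PebMove

section Subtree

variable {V : Type} [DecidableEq V] {T : PebSys V} {k : ℕ}

/-- Look at the last move that pebbles `r`: its in-neighbour `c` is pebbled there, and `r` stays
pebbled afterwards. -/
lemma exists_reflTransGen_pebMove_of_notMem_of_mem {r c : V} (hc : c ≠ r)
    (hcr : T.parent c = r) {A B : Finset V} (h : ReflTransGen (PebMove T k) A B) (hA : r ∉ A)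
    (hB : r ∈ B) :
    ∃ Q, c ∈ Q ∧ ReflTransGen (fun P Q => PebMove T k P Q ∧ r ∈ P ∧ r ∈ Q) Q B := by
  induction h with
  | refl => exact absurd hB hA
  | @tail C B _ hmove ih =>
    by_cases hC : r ∈ C
    · obtain ⟨Q, hcQ, hQ⟩ := ih hC
      exact ⟨Q, hcQ, hQ.tail ⟨hmove, hC, hB⟩⟩
    · have hcC := hmove.1.mem_of_parent_eq T hC hB hc hcr
      obtain ⟨v, hv, -⟩ := hmove.1
      refine ⟨B, ?_, .refl⟩
      rcases hv with ⟨-, rfl⟩ | ⟨-, rfl⟩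
      · exact Finset.mem_insert_of_mem hcC
      · exact absurd (Finset.mem_insert_of_mem hB) hC

variable {T' : PebSys {v : V // v ≠ T.root}}
  (hparent : ∀ v : {v : V // v ≠ T.root},
    (T'.parent v : V) = if T.parent v.val = T.root then v.val else T.parent v.val)
include hparent

lemma subtree_inNbr_iff (u v : {v : V // v ≠ T.root}) :
    (u ≠ v ∧ T'.parent u = v) ↔ (u.val ≠ v.val ∧ T.parent u.val = v.val) := by
  rw [Ne, Subtype.ext_iff, Subtype.ext_iff, hparent u]
  split_ifs with h
  · exact iff_of_false (fun h' => h'.1 h'.2) fun h' => v.2 (h'.2 ▸ h)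
  · rfl

lemma pebStep_map_subtype (hT : T.parent T.root = T.root)
    {P Q : Finset {v : V // v ≠ T.root}} (h : PebStep T' P Q) :
    PebStep T (P.map (.subtype _)) (Q.map (.subtype _)) := by
  obtain ⟨v, hv, hin⟩ := h
  refine ⟨v.val, ?_, fun u hu hp => ?_⟩
  · rcases hv with ⟨hvP, rfl⟩ | ⟨hvQ, rfl⟩
    · exact Or.inl ⟨(Finset.mem_map' _).not.mpr hvP, Finset.map_insert _ _ _⟩
    · exact Or.inr ⟨(Finset.mem_map' _).not.mpr hvQ, Finset.map_insert _ _ _⟩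
  · have hur : u ≠ T.root := by
      rintro rfl
      exact v.2 (hp.symm.trans hT)
    have huv := (subtree_inNbr_iff hparent ⟨u, hur⟩ v).mpr ⟨hu, hp⟩
    exact Finset.mem_map_of_mem _ (hin _ huv.1 huv.2)

lemma pebStep_subtype {P Q : Finset V} (hP : T.root ∈ P) (hQ : T.root ∈ Q)
    (h : PebStep T P Q) : PebStep T' (P.subtype (· ≠ T.root)) (Q.subtype (· ≠ T.root)) := by
  obtain ⟨v, hv, hin⟩ := h
  have hvr : v ≠ T.root := by
    rintro rfl
    rcases hv with ⟨h, -⟩ | ⟨h, -⟩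
    exacts [h hP, h hQ]
  refine ⟨⟨v, hvr⟩, ?_, fun u hu hp => ?_⟩
  · rcases hv with ⟨hvP, rfl⟩ | ⟨hvQ, rfl⟩
    · exact Or.inl ⟨mt Finset.mem_subtype.mp hvP, by ext; simp [Subtype.ext_iff]⟩
    · exact Or.inr ⟨mt Finset.mem_subtype.mp hvQ, by ext; simp [Subtype.ext_iff]⟩
  · have huv := (subtree_inNbr_iff hparent u ⟨v, hvr⟩).mp ⟨hu, hp⟩
    exact Finset.mem_subtype.mpr (hin _ huv.1 huv.2)

lemma exists_reflTransGen_subtree_of_reflTransGen {c : V}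
    (hc : c ≠ T.root ∧ T.parent c = T.root) (hroot : (T'.root : V) = c)
    (h : ReflTransGen (PebMove T k) ∅ {T.root}) :
    ∃ P, T'.root ∈ P ∧ ReflTransGen (PebMove T' (k - 1)) ∅ P := by
  obtain ⟨Q, hcQ, hQ⟩ := exists_reflTransGen_pebMove_of_notMem_of_mem hc.1 hc.2 h
    (Finset.notMem_empty _) (Finset.mem_singleton_self _)
  have hcard {P : Finset V} (hP : T.root ∈ P) (hk : P.card ≤ k) :
      (P.subtype (· ≠ T.root)).card ≤ k - 1 := by
    rw [Finset.card_subtype, Finset.filter_ne', Finset.card_erase_of_mem hP]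
    omega
  have hrestrict := ReflTransGen.lift (p := PebMove T' (k - 1))
    (fun P => P.subtype (· ≠ T.root))
    (fun P R ⟨hmove, hP, hR⟩ =>
      ⟨pebStep_subtype hparent hP hR hmove.1, hcard hP hmove.2.1, hcard hR hmove.2.2⟩) _ _ hQ
  have hempty : ({T.root} : Finset V).subtype (· ≠ T.root) = ∅ :=
    Finset.subtype_eq_empty.mpr (by simp)
  rw [Function.onFun, hempty] at hrestrict
  exact ⟨_, Finset.mem_subtype.mpr (hroot ▸ hcQ), Std.Symm.symm _ _ hrestrict⟩

lemma reflTransGen_of_reflTransGen_subtree (hT : T.parent T.root = T.root) {c : V}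
    (huniq : ∀ u : V, u ≠ T.root → T.parent u = T.root → u = c) (hroot : (T'.root : V) = c)
    {P : Finset {v : V // v ≠ T.root}} (hP : T'.root ∈ P)
    (h : ReflTransGen (PebMove T' k) ∅ P) :
    ReflTransGen (PebMove T (k + 1)) ∅ {T.root} := by
  have hPk : P.card ≤ k := card_le_of_reflTransGen_pebMove h (by simp)
  have hroot_notMem (R : Finset {v : V // v ≠ T.root}) : T.root ∉ R.map (.subtype _) :=
    Finset.notMem_map_subtype_of_not_property R (not_not.mpr rfl)
  have hup := ReflTransGen.lift (p := PebMove T (k + 1)) (fun R => R.map (.subtype _))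
    (fun R S hmove => ⟨pebStep_map_subtype hparent hT hmove.1,
      by simpa using hmove.2.1.trans k.le_succ, by simpa using hmove.2.2.trans k.le_succ⟩) _ _ h
  have hdown := ReflTransGen.lift (p := PebMove T (k + 1))
    (fun R => insert T.root (R.map (.subtype _)))
    (fun R S hmove => ⟨(pebStep_map_subtype hparent hT hmove.1).insert T (hroot_notMem R)
        (hroot_notMem S),
      (Finset.card_insert_le _ _).trans (by simpa using hmove.2.1),
      (Finset.card_insert_le _ _).trans (by simpa using hmove.2.2)⟩) _ _ (Std.Symm.symm _ _ h)
  have hpebble_root :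
      PebMove T (k + 1) (P.map (.subtype _)) (insert T.root (P.map (.subtype _))) :=
    ⟨⟨T.root, Or.inl ⟨hroot_notMem P, rfl⟩, fun u hu hp =>
        huniq u hu hp ▸ hroot ▸ Finset.mem_map_of_mem _ hP⟩,
      by simpa using hPk.trans k.le_succ,
      (Finset.card_insert_le _ _).trans (by simpa using hPk)⟩
  simp only [Function.onFun, Finset.map_empty] at hup hdown
  exact (hup.tail hpebble_root).trans hdown

end Subtree

lemma Nat.sInf_le_iff_sInf_le_pred {S S' : Set ℕ} (hS : ∀ m ∈ S, 0 < m ∧ m - 1 ∈ S')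
    (hS' : ∀ m ∈ S', m + 1 ∈ S) {k : ℕ} (hk : 0 < k) :
    sInf S ≤ k ↔ sInf S' ≤ k - 1 := by
  rcases S.eq_empty_or_nonempty with rfl | hne
  · obtain rfl : S' = ∅ := Set.eq_empty_of_forall_notMem hS'
    simp
  · obtain ⟨hpos, hpred⟩ := hS _ (Nat.sInf_mem hne)
    have hle : sInf S' ≤ sInf S - 1 := Nat.sInf_le hpred
    have hge : sInf S ≤ sInf S' + 1 := Nat.sInf_le (hS' _ (Nat.sInf_mem ⟨_, hpred⟩))
    omega

/-- Let `T` be a rooted directed tree whose root has exactly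
one in-neighbour `c` (so the root is a leaf of the underlying undirected
tree), and let `T'` be the subtree of `T` rooted at `c`, i.e. the rooted
directed tree on the vertices of `T` other than the root, with root `c` and
the parent function inherited from `T`.  Then for every positive integer `k`,
`rev(T) ≤ k ↔ vrev(T') ≤ k - 1`. -/
theorem rev_le_iff_vrev_subtree_le {V : Type} [Fintype V] [DecidableEq V]
    (T : PebSys V) (hT : IsRDTree T) (c : V)
    (hc : c ≠ T.root ∧ T.parent c = T.root)
    (huniq : ∀ u : V, u ≠ T.root → T.parent u = T.root → u = c)
    (T' : PebSys {v : V // v ≠ T.root})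
    (hroot : (T'.root : V) = c)
    (hparent : ∀ v : {v : V // v ≠ T.root},
      (T'.parent v : V) = if T.parent v.val = T.root then v.val else T.parent v.val)
    (k : ℕ) (hk : 0 < k) :
    revNum T ≤ k ↔ vrevNum T' ≤ k - 1 := by
  refine Nat.sInf_le_iff_sInf_le_pred (fun m hm => ?_) (fun m hm => ?_) hk
  · have hreach := exists_isPebbling_iff.mp hm
    refine ⟨(Finset.card_pos.mpr (Finset.singleton_nonempty _)).trans_le
      (card_le_of_reflTransGen_pebMove hreach (by simp)), ?_⟩
    exact exists_isVisPebbling_iff.mpr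
      (exists_reflTransGen_subtree_of_reflTransGen hparent hc hroot hreach)
  · obtain ⟨P, hP, hreach⟩ := exists_isVisPebbling_iff.mp hm
    exact exists_isPebbling_iff.mpr
      (reflTransGen_of_reflTransGen_subtree hparent hT.1 huniq hroot hP hreach)
end

section
/- There exist two finite directed acyclic graphs G₁ and G₂, each with a unique sink, such that the underlying undirected graphs of G₁ and G₂ are isomorphic, but rev(G₁) ≠ rev(G₂). (Concretely, on vertex set {1,…,7}, the DAG G₁ with edges 2→1, 3→1, 4→1, 4→3, 5→4, 6→4, 7→4 has rev(G₁) = 5, while the DAG G₂ with edges 2→1, 3→1, 4→1, 3→4, 5→4, 6→4, 7→4 has rev(G₂) = 6.) -/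
/-- A finite directed graph with a designated root vertex, given by its
adjacency (edge) relation `adj u v`, meaning a directed edge from `u` to `v`. -/
structure DagSys (V : Type) where
  adj : V → V → Prop
  root : V

/-- `G` is a rooted DAG: acyclic (no directed cycle through any vertex) and
the root is its unique sink (a vertex is without out-edges iff it is the root). -/
def IsRootedDAG {V : Type} [Fintype V] (G : DagSys V) : Prop :=
  (∀ v : V, ¬ Relation.TransGen G.adj v v) ∧
  (∀ v : V, (∀ w : V, ¬ G.adj v w) ↔ v = G.root)

/-- One legal move of the reversible pebble game on a DAG. -/
def DagPebStep {V : Type} [DecidableEq V] (G : DagSys V) (P Q : Finset V) : Prop :=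
  ∃ v : V, ((v ∉ P ∧ Q = insert v P) ∨ (v ∉ Q ∧ P = insert v Q)) ∧
    ∀ u : V, G.adj u v → u ∈ P

/-- A persistent reversible pebbling of a DAG. -/
def IsDagPebbling {V : Type} [DecidableEq V] (G : DagSys V) (L : List (Finset V)) : Prop :=
  L.head? = some ∅ ∧ L.getLast? = some {G.root} ∧ L.Chain' (DagPebStep G)

/-- A visiting reversible pebbling of a DAG. -/
def IsDagVisPebbling {V : Type} [DecidableEq V] (G : DagSys V) (L : List (Finset V)) : Prop :=
  L.head? = some ∅ ∧ L.getLast? = some ∅ ∧ (∃ P ∈ L, G.root ∈ P) ∧ L.Chain' (DagPebStep G)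

/-- The space of a pebbling: the maximum number of pebbles in any configuration. -/
def dagPebSpace {V : Type} (L : List (Finset V)) : ℕ := (L.map Finset.card).foldr max 0

/-- The persistent reversible pebbling number `rev` of a DAG. -/
noncomputable def dagRevNum {V : Type} [DecidableEq V] (G : DagSys V) : ℕ :=
  sInf {k | ∃ L : List (Finset V), IsDagPebbling G L ∧ dagPebSpace L ≤ k}

/-- The visiting reversible pebbling number `vrev` of a DAG. -/
noncomputable def dagVrevNum {V : Type} [DecidableEq V] (G : DagSys V) : ℕ :=
  sInf {k | ∃ L : List (Finset V), IsDagVisPebbling G L ∧ dagPebSpace L ≤ k}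

/-! Upper bounds are explicit pebblings. For the lower bounds, fix a vertex `v`, a set `pre` of
in-neighbours of `v`, and a set `D ∌ v` containing the sink in which every vertex has an
in-neighbour in `D ∪ {v}`. With at most `|pre| + 1` pebbles, "if `v` carries no pebble then no
vertex of `D` does" is preserved by every move: a vertex of `D` can only be pebbled on top of `v`
or of another vertex of `D`, and unpebbling `v` needs `pre ∪ {v}` pebbled, which leaves no room
for a pebble on `D`. The final configuration `{r}` violates it, so `rev ≥ |pre| + 2`.
In `G₁` take `v = 4`, `pre = {5, 6, 7}`, `D = {1, 3}`; in `G₂` take `v = 4`, `pre = {3, 5, 6, 7}`,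
`D = {1}`. -/

namespace DagSys

variable {V : Type}

theorem not_transGen_self_of_rank (G : DagSys V) (f : V → ℕ)
    (hf : ∀ u v, G.adj u v → f v < f u) (v : V) : ¬ Relation.TransGen G.adj v v := by
  intro hv
  have hlt : Relation.TransGen (· > ·) (f v) (f v) := hv.lift f hf
  rw [Relation.transGen_eq_self] at hlt
  exact lt_irrefl _ hlt

instance [Fintype V] [DecidableEq V] (G : DagSys V) [DecidableRel G.adj]
    (P Q : Finset V) : Decidable (DagPebStep G P Q) := by
  unfold DagPebStep; infer_instance

instance [Fintype V] [DecidableEq V] (G : DagSys V)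
    [DecidableRel G.adj] (L : List (Finset V)) : Decidable (IsDagPebbling G L) := by
  unfold IsDagPebbling; exact inferInstanceAs (Decidable (_ ∧ _ ∧ L.IsChain _))

end DagSys

theorem card_le_dagPebSpace {V : Type} {L : List (Finset V)} {P : Finset V} (hP : P ∈ L) :
    P.card ≤ dagPebSpace L :=
  List.le_max_of_le' 0 (List.mem_map_of_mem hP) le_rfl

theorem dagRevNum_eq_of_isDagPebbling {V : Type} [DecidableEq V] {G : DagSys V} {k : ℕ}
    {L : List (Finset V)} (hL : IsDagPebbling G L) (hLk : dagPebSpace L ≤ k)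
    (hlow : ∀ L', IsDagPebbling G L' → k ≤ dagPebSpace L') : dagRevNum G = k :=
  le_antisymm (Nat.sInf_le ⟨L, hL, hLk⟩)
    (le_csInf ⟨k, L, hL, hLk⟩ fun _ ⟨L', hL', hL'k⟩ => (hlow L' hL').trans hL'k)

section LowerBound

variable {V : Type} [DecidableEq V] {G : DagSys V} {v : V} {pre D : Finset V}

theorem DagPebStep.disjoint_of_notMem (hpre : ∀ u ∈ pre, G.adj u v)
    (hpreD : Disjoint pre (insert v D)) (hvD : v ∉ D) (hD : ∀ w ∈ D, ∃ u ∈ insert v D, G.adj u w)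
    {P Q : Finset V} (hstep : DagPebStep G P Q) (hP : P.card ≤ pre.card + 1)
    (hPD : v ∉ P → Disjoint P D) : v ∉ Q → Disjoint Q D := by
  intro hvQ
  obtain ⟨w, ⟨hwP, rfl⟩ | ⟨hwQ, rfl⟩, hwpre⟩ := hstep
  · have hvP : v ∉ P := fun h => hvQ (Finset.mem_insert_of_mem h)
    refine Finset.disjoint_insert_left.2 ⟨fun hwD => ?_, hPD hvP⟩
    obtain ⟨u, hu, huw⟩ := hD w hwD
    rcases Finset.mem_insert.1 hu with rfl | huD
    · exact hvP (hwpre u huw)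
    · exact Finset.disjoint_left.1 (hPD hvP) (hwpre u huw) huD
  · by_cases hvP : v ∈ insert w Q
    · obtain rfl : v = w := by simpa [hvQ] using hvP
      refine Finset.disjoint_left.2 fun x hxQ hxD => ?_
      have hx : x ∉ insert v pre := by
        simp only [Finset.mem_insert, not_or]
        exact ⟨fun h => hvD (h ▸ hxD), fun h => Finset.disjoint_left.1 hpreD h
          (Finset.mem_insert_of_mem hxD)⟩
      have hvpre : v ∉ pre := fun h => Finset.disjoint_left.1 hpreD h (Finset.mem_insert_self _ _)
      have hsub : insert x (insert v pre) ⊆ insert v Q :=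
        Finset.insert_subset (Finset.mem_insert_of_mem hxQ)
          (Finset.insert_subset (Finset.mem_insert_self _ _) fun u hu => hwpre u (hpre u hu))
      have := Finset.card_le_card hsub
      rw [Finset.card_insert_of_notMem hx, Finset.card_insert_of_notMem hvpre] at this
      omega
    · exact (hPD hvP).mono_left (Finset.subset_insert _ _)

theorem card_add_two_le_dagPebSpace (hpre : ∀ u ∈ pre, G.adj u v)
    (hpreD : Disjoint pre (insert v D)) (hvD : v ∉ D) (hD : ∀ w ∈ D, ∃ u ∈ insert v D, G.adj u w)
    (hroot : G.root ∈ D) {L : List (Finset V)} (hL : IsDagPebbling G L) :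
    pre.card + 2 ≤ dagPebSpace L := by
  by_contra! hsmall
  obtain ⟨hhead, hlast, hchain⟩ := hL
  have hsteps : L.IsChain fun P Q => DagPebStep G P Q ∧ P.card ≤ pre.card + 1 :=
    hchain.imp_of_mem_imp fun P _ hP _ h => ⟨h, by have := card_le_dagPebSpace hP; omega⟩
  have hinv : ∀ P ∈ L, v ∉ P → Disjoint P D :=
    hsteps.induction _ _ (fun _ _ h => h.1.disjoint_of_notMem hpre hpreD hvD hD h.2)
      fun hne => by simp [List.head_eq_iff_head?_eq_some hne |>.2 hhead]
  have hvr : v ∉ ({G.root} : Finset V) := by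
    simpa using fun h : v = G.root => hvD (h ▸ hroot)
  exact Finset.disjoint_singleton_left.1 (hinv _ (List.mem_of_getLast? hlast) hvr) hroot

end LowerBound

/-- Vertex `i` of the edge list is `i - 1 : Fin n`, so the sink `0` is labelled `1`. -/
def DagSys.ofEdges (n : ℕ) [NeZero n] (E : List (ℕ × ℕ)) : DagSys (Fin n) where
  adj u v := (u.val + 1, v.val + 1) ∈ E
  root := 0

instance (n : ℕ) [NeZero n] (E : List (ℕ × ℕ)) : DecidableRel (DagSys.ofEdges n E).adj :=
  fun u v => inferInstanceAs (Decidable ((u.val + 1, v.val + 1) ∈ E))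

abbrev dag₁ : DagSys (Fin 7) := .ofEdges 7 [(2,1), (3,1), (4,1), (4,3), (5,4), (6,4), (7,4)]

abbrev dag₂ : DagSys (Fin 7) := .ofEdges 7 [(2,1), (3,1), (4,1), (3,4), (5,4), (6,4), (7,4)]

theorem isRootedDAG_dag₁ : IsRootedDAG dag₁ :=
  ⟨dag₁.not_transGen_self_of_rank Fin.val (by decide), by decide⟩

theorem isRootedDAG_dag₂ : IsRootedDAG dag₂ :=
  ⟨dag₂.not_transGen_self_of_rank (fun v => if v = 0 then 0 else if v = 3 then 1 else 2)
    (by decide), by decide⟩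

theorem dag₁_adj_symm_iff_dag₂ (u v : Fin 7) :
    (dag₁.adj u v ∨ dag₁.adj v u) ↔ (dag₂.adj u v ∨ dag₂.adj v u) := by
  revert u v; decide

theorem dagRevNum_dag₁ : dagRevNum dag₁ = 5 :=
  dagRevNum_eq_of_isDagPebbling
    (L := [∅, {4}, {4,5}, {4,5,6}, {3,4,5,6}, {3,5,6}, {3,6}, {3}, {2,3}, {1,2,3}, {0,1,2,3},
      {0,2,3}, {0,3}, {0,3,4}, {0,3,4,5}, {0,3,4,5,6}, {0,4,5,6}, {0,5,6}, {0,6}, {0}])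
    (by decide) (by decide)
    fun _ hL => card_add_two_le_dagPebSpace (v := 3) (pre := {4, 5, 6}) (D := {0, 2})
      (by decide) (by decide) (by decide) (by decide) (by decide) hL

theorem dagRevNum_dag₂ : dagRevNum dag₂ = 6 :=
  dagRevNum_eq_of_isDagPebbling
    (L := [∅, {2}, {2,4}, {2,4,5}, {2,4,5,6}, {2,3,4,5,6}, {2,3,4,5}, {2,3,4}, {2,3}, {1,2,3},
      {0,1,2,3}, {0,2,3}, {0,2,3,4}, {0,2,3,4,5}, {0,2,3,4,5,6}, {0,2,4,5,6}, {0,4,5,6}, {0,5,6},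
      {0,6}, {0}])
    (by decide) (by decide)
    fun _ hL => card_add_two_le_dagPebSpace (v := 3) (pre := {2, 4, 5, 6}) (D := {0})
      (by decide) (by decide) (by decide) (by decide) (by decide) hL

/-- There are two finite DAGs, each with a unique sink, whose
underlying undirected graphs coincide (in particular are isomorphic), but
whose persistent reversible pebbling numbers differ.  Concretely, on the
vertex set `{1, …, 7}` (encoded as `Fin 7` with vertex `i` encoded as `i - 1`),
the DAG `G₁` with edges `2→1, 3→1, 4→1, 4→3, 5→4, 6→4, 7→4` has `rev(G₁) = 5`,
while the DAG `G₂` with edges `2→1, 3→1, 4→1, 3→4, 5→4, 6→4, 7→4` has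
`rev(G₂) = 6`. -/
theorem exists_dags_same_undirected_different_rev :
    ∃ G₁ G₂ : DagSys (Fin 7),
      IsRootedDAG G₁ ∧ IsRootedDAG G₂ ∧
      G₁.root = 0 ∧ G₂.root = 0 ∧
      (∀ u v : Fin 7, G₁.adj u v ↔
        ((u.val + 1, v.val + 1) ∈
          [(2,1), (3,1), (4,1), (4,3), (5,4), (6,4), (7,4)])) ∧
      (∀ u v : Fin 7, G₂.adj u v ↔
        ((u.val + 1, v.val + 1) ∈
          [(2,1), (3,1), (4,1), (3,4), (5,4), (6,4), (7,4)])) ∧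
      (∀ u v : Fin 7, (G₁.adj u v ∨ G₁.adj v u) ↔ (G₂.adj u v ∨ G₂.adj v u)) ∧
      dagRevNum G₁ = 5 ∧ dagRevNum G₂ = 6 ∧ dagRevNum G₁ ≠ dagRevNum G₂ :=
  ⟨dag₁, dag₂, isRootedDAG_dag₁, isRootedDAG_dag₂, rfl, rfl, fun _ _ => Iff.rfl,
    fun _ _ => Iff.rfl, dag₁_adj_symm_iff_dag₂, dagRevNum_dag₁, dagRevNum_dag₂,
    by rw [dagRevNum_dag₁, dagRevNum_dag₂]; decide⟩
end
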